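/- Let M > 0, λ ≥ 0, c₀ > 0, δ₁ > 0, δ > 0, and let R be a Kruskal radius function on (−δ, c₀² + δ). Let Ω ⊆ ℝ² be an open set containing [0,c₀] × [0,δ₁) such that every (μ,ν) ∈ Ω has μ·ν ∈ (−δ, c₀² + δ), and let w : ℝ² → ℝ be smooth on Ω and satisfy the λ-mode wave equation in Kruskal coordinates at every (μ,ν) ∈ Ω with μ ≥ 0 and ν ≥ 0. If w(μ,0) = 0 for all μ ∈ [0,c₀] and w(0,ν) = 0 for all ν ∈ [0,δ₁), then w vanishes to infinite order at the segment {ν = 0, 0 ≤ μ ≤ c₀}: for every k ∈ ℕ and every μ ∈ [0,c₀], (∂_ν^k w)(μ,0) = 0. (Key step in the proof of Theorem 5.1.) -/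

import Mathlib

open MeasureTheory Filter Set Function
open scoped ContDiff

/-- A Kruskal radius function on `(−δ, X)`: a smooth positive function `R` with
`e^{R(x)/(2M)}·(R(x) − 2M) = x`, expressing the Schwarzschild radius in terms of the
product `μ·ν` of the Kruskal coordinates. -/
def IsKruskalRadius (M δ X : ℝ) (R : ℝ → ℝ) : Prop :=
  ContDiffOn ℝ ∞ R (Set.Ioo (-δ) X) ∧
  ∀ x ∈ Set.Ioo (-δ) X, 0 < R x ∧ Real.exp (R x/(2*M)) * (R x - 2*M) = x

/-- The λ-mode wave equation in Kruskal coordinates at the point `(μ,ν)`: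
`∂_ν(R(μν)²·∂_μ w) + ∂_μ(R(μν)²·∂_ν w) = (8M²λ²/(R(μν)·e^{R(μν)/(2M)}))·w`. -/
def KruskalEqAt (M lam : ℝ) (R : ℝ → ℝ) (w : ℝ → ℝ → ℝ) (μ ν : ℝ) : Prop :=
  deriv (fun n => (R (μ*n))^2 * deriv (fun m => w m n) μ) ν
    + deriv (fun m => (R (m*ν))^2 * deriv (fun n => w m n) ν) μ
    = (8*M^2*lam^2 / (R (μ*ν) * Real.exp (R (μ*ν)/(2*M)))) * w μ ν

/-!
Write `u_i = ∂_ν^i w`. Expanding the equation and differentiating it `k` times in `ν` gives, for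
`μ, ν ≥ 0`, `2R(μν)² ∂_μ u_{k+1} = ` a combination of `u_i`, `∂_μ u_i` (`i ≤ k`) and of `ν` times
`u_{k+1}`, `∂_μ u_{k+1}`; the equation only holds for `ν ≥ 0`, but a function vanishing on
`ν ≥ 0` has vanishing (one-sided) `ν`-derivatives there. By induction on `k`: if `u_0, …, u_k`
vanish on the segment `{ν = 0}`, so does the right side, hence `∂_μ u_{k+1} = 0` along the
segment since `R > 0`; and `u_{k+1}(0, 0) = 0` because `w(0, ·)` vanishes on `[0, δ₁)`.
-/

open Topology

noncomputable def partialFst {E : Type*} [NormedAddCommGroup E] [NormedSpace ℝ E]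
    (F : ℝ × ℝ → E) (p : ℝ × ℝ) : E :=
  deriv (fun x => F (x, p.2)) p.1

noncomputable def partialSnd {E : Type*} [NormedAddCommGroup E] [NormedSpace ℝ E]
    (F : ℝ × ℝ → E) (p : ℝ × ℝ) : E :=
  deriv (fun y => F (p.1, y)) p.2

section PartialDerivatives

variable {E : Type*} [NormedAddCommGroup E] [NormedSpace ℝ E] {F G : ℝ × ℝ → E} {p : ℝ × ℝ}
  {Ω : Set (ℝ × ℝ)}

theorem partialSnd_iterate_apply (F : ℝ × ℝ → E) (k : ℕ) (μ ν : ℝ) :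
    partialSnd^[k] F (μ, ν) = deriv^[k] (fun y => F (μ, y)) ν := by
  induction k generalizing F with
  | zero => rfl
  | succ k ih => rw [iterate_succ_apply, ih]; rfl

theorem Filter.EventuallyEq.partialFst_eq (h : F =ᶠ[𝓝 p] G) : partialFst F p = partialFst G p :=
  Filter.EventuallyEq.deriv_eq ((Continuous.prodMk_left p.2).continuousAt.preimage_mem_nhds h)

theorem Filter.EventuallyEq.partialSnd_eq (h : F =ᶠ[𝓝 p] G) : partialSnd F p = partialSnd G p :=
  Filter.EventuallyEq.deriv_eq ((Continuous.prodMk_right p.1).continuousAt.preimage_mem_nhds h)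

theorem DifferentiableAt.hasDerivAt_partialFst (hF : DifferentiableAt ℝ F p) :
    HasDerivAt (fun x => F (x, p.2)) (fderiv ℝ F p (1, 0)) p.1 :=
  hF.hasFDerivAt.comp_hasDerivAt p.1 ((hasDerivAt_id p.1).prodMk (hasDerivAt_const p.1 p.2))

theorem DifferentiableAt.hasDerivAt_partialSnd (hF : DifferentiableAt ℝ F p) :
    HasDerivAt (fun y => F (p.1, y)) (fderiv ℝ F p (0, 1)) p.2 :=
  hF.hasFDerivAt.comp_hasDerivAt p.2 ((hasDerivAt_const p.2 p.1).prodMk (hasDerivAt_id p.2))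

theorem ContDiffOn.differentiableAt_of_isOpen (hΩ : IsOpen Ω) (hF : ContDiffOn ℝ ∞ F Ω)
    (hp : p ∈ Ω) : DifferentiableAt ℝ F p :=
  (hF.contDiffAt (hΩ.mem_nhds hp)).differentiableAt (by simp)

theorem ContDiffOn.partialFst_of_isOpen (hΩ : IsOpen Ω) (hF : ContDiffOn ℝ ∞ F Ω) :
    ContDiffOn ℝ ∞ (partialFst F) Ω :=
  ((hF.fderiv_of_isOpen hΩ le_rfl).clm_apply contDiffOn_const).congr fun _ hq =>
    (hF.differentiableAt_of_isOpen hΩ hq).hasDerivAt_partialFst.deriv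

theorem ContDiffOn.partialSnd_of_isOpen (hΩ : IsOpen Ω) (hF : ContDiffOn ℝ ∞ F Ω) :
    ContDiffOn ℝ ∞ (partialSnd F) Ω :=
  ((hF.fderiv_of_isOpen hΩ le_rfl).clm_apply contDiffOn_const).congr fun _ hq =>
    (hF.differentiableAt_of_isOpen hΩ hq).hasDerivAt_partialSnd.deriv

theorem ContDiffOn.iterate_partialSnd_of_isOpen (hΩ : IsOpen Ω) (hF : ContDiffOn ℝ ∞ F Ω)
    (k : ℕ) : ContDiffOn ℝ ∞ (partialSnd^[k] F) Ω := by
  induction k with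
  | zero => exact hF
  | succ k ih => rw [iterate_succ_apply']; exact ih.partialSnd_of_isOpen hΩ

theorem ContDiffAt.partialSnd_partialFst (hF : ContDiffAt ℝ 2 F p) :
    partialSnd (partialFst F) p = partialFst (partialSnd F) p := by
  have hd : ∀ᶠ q in 𝓝 p, DifferentiableAt ℝ F q :=
    (hF.eventually (by simp)).mono fun q hq => hq.differentiableAt (by simp)
  have hd2 : DifferentiableAt ℝ (fderiv ℝ F) p :=
    (hF.fderiv_right (m := 1) le_rfl).differentiableAt one_ne_zero
  have h1 : partialFst F =ᶠ[𝓝 p] fun q => fderiv ℝ F q (1, 0) :=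
    hd.mono fun q hq => hq.hasDerivAt_partialFst.deriv
  have h2 : partialSnd F =ᶠ[𝓝 p] fun q => fderiv ℝ F q (0, 1) :=
    hd.mono fun q hq => hq.hasDerivAt_partialSnd.deriv
  rw [h1.partialSnd_eq, h2.partialFst_eq,
    partialSnd, partialFst, (hd2.hasDerivAt_partialSnd.clm_apply (hasDerivAt_const _ _)).deriv,
    (hd2.hasDerivAt_partialFst.clm_apply (hasDerivAt_const _ _)).deriv,
    hF.isSymmSndFDerivAt (by simp [minSmoothness_of_isRCLikeNormedField])]

theorem ContDiffOn.partialSnd_partialFst_of_isOpen (hΩ : IsOpen Ω) (hF : ContDiffOn ℝ ∞ F Ω)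
    (hp : p ∈ Ω) : partialSnd (partialFst F) p = partialFst (partialSnd F) p :=
  ((hF.contDiffAt (hΩ.mem_nhds hp)).of_le (WithTop.coe_le_coe.2 le_top)).partialSnd_partialFst

theorem partialSnd_add (hF : DifferentiableAt ℝ F p) (hG : DifferentiableAt ℝ G p) :
    partialSnd (fun q => F q + G q) p = partialSnd F p + partialSnd G p :=
  deriv_add hF.hasDerivAt_partialSnd.differentiableAt hG.hasDerivAt_partialSnd.differentiableAt

theorem partialSnd_sub (hF : DifferentiableAt ℝ F p) (hG : DifferentiableAt ℝ G p) :
    partialSnd (fun q => F q - G q) p = partialSnd F p - partialSnd G p :=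
  deriv_sub hF.hasDerivAt_partialSnd.differentiableAt hG.hasDerivAt_partialSnd.differentiableAt

end PartialDerivatives

section ScalarPartialDerivatives

variable {F G : ℝ × ℝ → ℝ} {p : ℝ × ℝ}

theorem partialFst_mul (hF : DifferentiableAt ℝ F p) (hG : DifferentiableAt ℝ G p) :
    partialFst (fun q => F q * G q) p = partialFst F p * G p + F p * partialFst G p :=
  deriv_mul hF.hasDerivAt_partialFst.differentiableAt hG.hasDerivAt_partialFst.differentiableAt

theorem partialSnd_mul (hF : DifferentiableAt ℝ F p) (hG : DifferentiableAt ℝ G p) :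
    partialSnd (fun q => F q * G q) p = partialSnd F p * G p + F p * partialSnd G p :=
  deriv_mul hF.hasDerivAt_partialSnd.differentiableAt hG.hasDerivAt_partialSnd.differentiableAt

theorem partialSnd_snd_mul (hF : DifferentiableAt ℝ F p) :
    partialSnd (fun q => q.2 * F q) p = F p + p.2 * partialSnd F p := by
  rw [partialSnd_mul differentiableAt_snd hF]
  simp [partialSnd]

theorem partialFst_comp_mul {f : ℝ → ℝ} (hf : DifferentiableAt ℝ f (p.1 * p.2)) :
    partialFst (fun q => f (q.1 * q.2)) p = p.2 * deriv f (p.1 * p.2) :=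
  (hf.hasDerivAt.comp p.1 (hasDerivAt_mul_const p.2)).deriv.trans (mul_comm _ _)

end ScalarPartialDerivatives

section OneSidedVanishing

variable {E : Type*} [NormedAddCommGroup E] [NormedSpace ℝ E]

theorem deriv_eq_zero_of_eventuallyEq_nhdsGE {g : ℝ → E} {x : ℝ} (h : g =ᶠ[𝓝[≥] x] 0) :
    deriv g x = 0 := by
  by_cases hg : DifferentiableAt ℝ g x
  · have h0 : HasDerivWithinAt g 0 (Ici x) x :=
      (hasDerivWithinAt_const x _ 0).congr_of_eventuallyEq h (h.eq_of_nhdsWithin self_mem_Ici)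
    exact (uniqueDiffWithinAt_Ici x).eq_deriv _ hg.hasDerivAt.hasDerivWithinAt h0
  · exact deriv_zero_of_not_differentiableAt hg

theorem iterate_deriv_eqOn_zero {g : ℝ → E} {s : Set ℝ} (hs : ∀ x ∈ s, s ∈ 𝓝[≥] x)
    (hg : EqOn g 0 s) (k : ℕ) : EqOn (deriv^[k] g) 0 s := by
  induction k with
  | zero => exact hg
  | succ k ih =>
    intro x hx
    rw [iterate_succ_apply']
    exact deriv_eq_zero_of_eventuallyEq_nhdsGE (eventually_of_mem (hs x hx) ih)

end OneSidedVanishing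

theorem constant_of_deriv_eq_zero_on_Ioo {φ : ℝ → ℝ} {a b : ℝ} (hcont : ContinuousOn φ (Icc a b))
    (hdiff : DifferentiableOn ℝ φ (Ioo a b)) (hderiv : ∀ x ∈ Ioo a b, deriv φ x = 0) :
    ∀ x ∈ Icc a b, φ x = φ a := by
  intro x hx
  rcases hx.1.eq_or_lt with rfl | hax
  · rfl
  obtain ⟨c, hc, hslope⟩ := exists_deriv_eq_slope φ hax (hcont.mono (Icc_subset_Icc_right hx.2))
    (hdiff.mono (Ioo_subset_Ioo_right hx.2))
  rw [hderiv c ⟨hc.1, hc.2.trans_le hx.2⟩, eq_comm, div_eq_zero_iff, sub_eq_zero] at hslope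
  exact hslope.resolve_right (sub_ne_zero.2 hax.ne')

/-- The terms that accompany the principal part `a · ∂_μ ∂_ν^{k+1} F` in `∂_ν^k` of the equation:
they vanish on `{ν = 0}` wherever the `∂_ν^i F` with `i ≤ k` do, and `∂_ν` raises the order
by one. -/
inductive IsLowerOrder (Ω : Set (ℝ × ℝ)) (F : ℝ × ℝ → ℝ) : ℕ → (ℝ × ℝ → ℝ) → Prop
  | mul_iterate {k i : ℕ} {a : ℝ × ℝ → ℝ} (ha : ContDiffOn ℝ ∞ a Ω) (hi : i ≤ k) :
      IsLowerOrder Ω F k fun p => a p * partialSnd^[i] F p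
  | mul_partialFst_iterate {k i : ℕ} {a : ℝ × ℝ → ℝ} (ha : ContDiffOn ℝ ∞ a Ω) (hi : i ≤ k) :
      IsLowerOrder Ω F k fun p => a p * partialFst (partialSnd^[i] F) p
  | snd_mul {k : ℕ} {N : ℝ × ℝ → ℝ} :
      IsLowerOrder Ω F (k + 1) N → IsLowerOrder Ω F k fun p => p.2 * N p
  | add {k : ℕ} {N N' : ℝ × ℝ → ℝ} :
      IsLowerOrder Ω F k N → IsLowerOrder Ω F k N' → IsLowerOrder Ω F k fun p => N p + N' p
  | congr {k : ℕ} {N N' : ℝ × ℝ → ℝ} : IsLowerOrder Ω F k N → EqOn N N' Ω → IsLowerOrder Ω F k N'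

namespace IsLowerOrder

variable {Ω : Set (ℝ × ℝ)} {F N : ℝ × ℝ → ℝ} {k : ℕ}

theorem contDiffOn (hΩ : IsOpen Ω) (hF : ContDiffOn ℝ ∞ F Ω) (hN : IsLowerOrder Ω F k N) :
    ContDiffOn ℝ ∞ N Ω := by
  induction hN with
  | mul_iterate ha => exact ha.mul (hF.iterate_partialSnd_of_isOpen hΩ _)
  | mul_partialFst_iterate ha =>
    exact ha.mul ((hF.iterate_partialSnd_of_isOpen hΩ _).partialFst_of_isOpen hΩ)
  | snd_mul _ ih => exact contDiffOn_snd.mul ih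
  | add _ _ ih ih' => exact ih.add ih'
  | congr _ h ih => exact ih.congr fun p hp => (h hp).symm

theorem partialSnd_of_isOpen (hΩ : IsOpen Ω) (hF : ContDiffOn ℝ ∞ F Ω) (hN : IsLowerOrder Ω F k N) :
    IsLowerOrder Ω F (k + 1) (partialSnd N) := by
  have hu := hF.iterate_partialSnd_of_isOpen hΩ
  induction hN with
  | @mul_iterate k i a ha hi =>
    refine ((mul_iterate (ha.partialSnd_of_isOpen hΩ) (hi.trans k.le_succ)).add
      (mul_iterate ha (Nat.succ_le_succ hi))).congr fun p hp => ?_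
    rw [partialSnd_mul (ha.differentiableAt_of_isOpen hΩ hp)
      ((hu i).differentiableAt_of_isOpen hΩ hp), iterate_succ_apply']
  | @mul_partialFst_iterate k i a ha hi =>
    refine ((mul_partialFst_iterate (ha.partialSnd_of_isOpen hΩ) (hi.trans k.le_succ)).add
      (mul_partialFst_iterate ha (Nat.succ_le_succ hi))).congr fun p hp => ?_
    rw [partialSnd_mul (ha.differentiableAt_of_isOpen hΩ hp)
        (((hu i).partialFst_of_isOpen hΩ).differentiableAt_of_isOpen hΩ hp),
      (hu i).partialSnd_partialFst_of_isOpen hΩ hp, iterate_succ_apply']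
  | @snd_mul k N hN ih =>
    refine (hN.add ih.snd_mul).congr fun p hp => ?_
    rw [partialSnd_snd_mul ((hN.contDiffOn hΩ hF).differentiableAt_of_isOpen hΩ hp)]
  | add hN hN' ih ih' =>
    refine (ih.add ih').congr fun p hp => ?_
    rw [partialSnd_add ((hN.contDiffOn hΩ hF).differentiableAt_of_isOpen hΩ hp)
      ((hN'.contDiffOn hΩ hF).differentiableAt_of_isOpen hΩ hp)]
  | congr _ h ih =>
    exact ih.congr fun p hp =>
      Filter.EventuallyEq.partialSnd_eq (eventually_of_mem (hΩ.mem_nhds hp) h)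

theorem apply_eq_zero (hN : IsLowerOrder Ω F k N) {μ : ℝ} (hμ : (μ, 0) ∈ Ω)
    (hvan : ∀ i ≤ k, (fun x => partialSnd^[i] F (x, 0)) =ᶠ[𝓝 μ] 0) : N (μ, 0) = 0 := by
  induction hN with
  | mul_iterate _ hi => simp [(hvan _ hi).self_of_nhds]
  | @mul_partialFst_iterate _ i _ _ hi =>
    have h : deriv (fun x => partialSnd^[i] F (x, 0)) μ = 0 := by
      rw [(hvan _ hi).deriv_eq]; exact deriv_const μ 0
    simp [_root_.partialFst, h]
  | snd_mul => simp
  | add _ _ ih ih' => simp [ih hvan, ih' hvan]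
  | congr _ h ih => rw [← h hμ, ih hvan]

end IsLowerOrder

section CharacteristicInitialValueProblem

variable {Ω : Set (ℝ × ℝ)} {F G a : ℝ × ℝ → ℝ}

theorem IsLowerOrder.iterate_partialSnd_sub (hΩ : IsOpen Ω) (hF : ContDiffOn ℝ ∞ F Ω)
    (ha : ContDiffOn ℝ ∞ a Ω)
    (hG : IsLowerOrder Ω F 0 fun p => G p - a p * partialFst (partialSnd F) p) (k : ℕ) :
    IsLowerOrder Ω F k fun p => partialSnd^[k] G p - a p * partialFst (partialSnd^[k + 1] F) p := by
  induction k with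
  | zero => exact hG
  | succ k ih =>
    have hu := (hF.iterate_partialSnd_of_isOpen hΩ (k + 1)).partialFst_of_isOpen hΩ
    have hGk : ContDiffOn ℝ ∞ (partialSnd^[k] G) Ω :=
      ((ih.contDiffOn hΩ hF).add (ha.mul hu)).congr fun p _ => (sub_add_cancel _ _).symm
    refine ((ih.partialSnd_of_isOpen hΩ hF).add
      (mul_partialFst_iterate (ha.partialSnd_of_isOpen hΩ) le_rfl)).congr fun p hp => ?_
    beta_reduce
    rw [iterate_succ_apply' _ k G, iterate_succ_apply' _ (k + 1) F,
      partialSnd_sub (hGk.differentiableAt_of_isOpen hΩ hp)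
        ((ha.mul hu).differentiableAt_of_isOpen hΩ hp), partialSnd_mul
      (ha.differentiableAt_of_isOpen hΩ hp) (hu.differentiableAt_of_isOpen hΩ hp),
      (hF.iterate_partialSnd_of_isOpen hΩ (k + 1)).partialSnd_partialFst_of_isOpen hΩ hp]
    ring

theorem iterate_partialSnd_eq_zero_of_forall_nonneg (hΩ : IsOpen Ω)
    (hG : ∀ p ∈ Ω, 0 ≤ p.1 → 0 ≤ p.2 → G p = 0) (k : ℕ) :
    ∀ p ∈ Ω, 0 ≤ p.1 → 0 ≤ p.2 → partialSnd^[k] G p = 0 := by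
  rintro ⟨μ, ν⟩ hp hμ hν
  rw [partialSnd_iterate_apply]
  refine iterate_deriv_eqOn_zero (s := {y | (μ, y) ∈ Ω} ∩ Ici 0) (fun y hy => ?_)
    (fun y hy => hG _ hy.1 hμ hy.2) k ⟨hp, hν⟩
  exact inter_mem (mem_nhdsWithin_of_mem_nhds
    ((hΩ.preimage (Continuous.prodMk_right μ)).mem_nhds hy.1))
    (mem_of_superset self_mem_nhdsWithin (Ici_subset_Ici.2 hy.2))

theorem iterate_partialSnd_eq_zero_on_segment (hΩ : IsOpen Ω) (hF : ContDiffOn ℝ ∞ F Ω)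
    (ha : ContDiffOn ℝ ∞ a Ω)
    (hG : IsLowerOrder Ω F 0 fun p => G p - a p * partialFst (partialSnd F) p)
    (hG0 : ∀ p ∈ Ω, 0 ≤ p.1 → 0 ≤ p.2 → G p = 0) {c : ℝ} (ha0 : ∀ μ ∈ Ioo 0 c, a (μ, 0) ≠ 0)
    (hseg : ∀ μ ∈ Icc 0 c, (μ, 0) ∈ Ω) (hF0 : ∀ μ ∈ Icc 0 c, F (μ, 0) = 0)
    (hcorner : ∀ k, partialSnd^[k] F (0, 0) = 0) (k : ℕ) :
    ∀ μ ∈ Icc 0 c, partialSnd^[k] F (μ, 0) = 0 := by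
  induction k using Nat.strong_induction_on with
  | _ k ih =>
  rcases k with _ | k
  · exact hF0
  have hvan : ∀ i ≤ k, ∀ μ ∈ Ioo 0 c, (fun x => partialSnd^[i] F (x, 0)) =ᶠ[𝓝 μ] 0 :=
    fun i hi μ hμ => eventually_of_mem (isOpen_Ioo.mem_nhds hμ) fun x hx =>
      ih i (Nat.lt_succ_of_le hi) x (Ioo_subset_Icc_self hx)
  have hderiv : ∀ μ ∈ Ioo 0 c, deriv (fun x => partialSnd^[k + 1] F (x, 0)) μ = 0 := by
    intro μ hμ
    have hμΩ := hseg μ (Ioo_subset_Icc_self hμ)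
    have h := (hG.iterate_partialSnd_sub hΩ hF ha k).apply_eq_zero hμΩ fun i hi => hvan i hi μ hμ
    rw [iterate_partialSnd_eq_zero_of_forall_nonneg hΩ hG0 k _ hμΩ hμ.1.le le_rfl, zero_sub,
      neg_eq_zero] at h
    exact (mul_eq_zero.1 h).resolve_left (ha0 μ hμ)
  have hslice : ContDiffOn ℝ ∞ (fun x => partialSnd^[k + 1] F (x, 0)) (Icc 0 c) :=
    (hF.iterate_partialSnd_of_isOpen hΩ _).comp (contDiff_prodMk_left 0).contDiffOn hseg
  intro μ hμ
  rw [constant_of_deriv_eq_zero_on_Ioo hslice.continuousOn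
    ((hslice.mono Ioo_subset_Icc_self).differentiableOn (by simp)) hderiv μ hμ]
  exact hcorner _

end CharacteristicInitialValueProblem

noncomputable def radialWaveOperator (f : ℝ → ℝ) (V F : ℝ × ℝ → ℝ) (p : ℝ × ℝ) : ℝ :=
  partialSnd (fun q => f (q.1 * q.2) * partialFst F q) p
    + partialFst (fun q => f (q.1 * q.2) * partialSnd F q) p - V p * F p

theorem isLowerOrder_radialWaveOperator_sub {Ω : Set (ℝ × ℝ)} {F V : ℝ × ℝ → ℝ} {f : ℝ → ℝ}
    {s : Set ℝ} (hΩ : IsOpen Ω) (hF : ContDiffOn ℝ ∞ F Ω) (hs : IsOpen s)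
    (hf : ContDiffOn ℝ ∞ f s) (hΩs : MapsTo (fun p : ℝ × ℝ => p.1 * p.2) Ω s)
    (hV : ContDiffOn ℝ ∞ V Ω) :
    IsLowerOrder Ω F 0 fun p =>
      radialWaveOperator f V F p - 2 * f (p.1 * p.2) * partialFst (partialSnd F) p := by
  have hmul : ContDiff ℝ ∞ fun p : ℝ × ℝ => p.1 * p.2 := contDiff_fst.mul contDiff_snd
  have hA : ContDiffOn ℝ ∞ (fun q : ℝ × ℝ => f (q.1 * q.2)) Ω := hf.comp hmul.contDiffOn hΩs
  have hf' : ContDiffOn ℝ ∞ (fun q : ℝ × ℝ => deriv f (q.1 * q.2)) Ω :=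
    (hf.deriv_of_isOpen hs le_rfl).comp hmul.contDiffOn hΩs
  refine ((IsLowerOrder.mul_partialFst_iterate (i := 0) (hA.partialSnd_of_isOpen hΩ) le_rfl).add
    ((IsLowerOrder.mul_iterate (i := 1) hf' le_rfl).snd_mul.add
      (IsLowerOrder.mul_iterate (i := 0) hV.neg le_rfl))).congr fun p hp => ?_
  have hfp : DifferentiableAt ℝ f (p.1 * p.2) :=
    (hf.differentiableOn (by simp)).differentiableAt (hs.mem_nhds (hΩs hp))
  rw [radialWaveOperator, partialSnd_mul (hA.differentiableAt_of_isOpen hΩ hp)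
      ((hF.partialFst_of_isOpen hΩ).differentiableAt_of_isOpen hΩ hp),
    partialFst_mul (hA.differentiableAt_of_isOpen hΩ hp)
      ((hF.partialSnd_of_isOpen hΩ).differentiableAt_of_isOpen hΩ hp),
    partialFst_comp_mul hfp, hF.partialSnd_partialFst_of_isOpen hΩ hp]
  simp only [iterate_zero, iterate_one, id]
  ring

theorem infinite_order_vanishing_at_horizon_general
    (M lam c₀ δ₁ δ : ℝ) (hδ₁ : 0 < δ₁)
    (R : ℝ → ℝ) (hR : IsKruskalRadius M δ (c₀^2 + δ) R)
    (Ω : Set (ℝ × ℝ)) (hΩopen : IsOpen Ω)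
    (hΩsub : Set.Icc (0:ℝ) c₀ ×ˢ Set.Ico (0:ℝ) δ₁ ⊆ Ω)
    (hΩprod : ∀ p ∈ Ω, p.1 * p.2 ∈ Set.Ioo (-δ) (c₀^2 + δ))
    (w : ℝ → ℝ → ℝ) (hw : ContDiffOn ℝ ∞ (Function.uncurry w) Ω)
    (heq : ∀ p ∈ Ω, 0 ≤ p.1 → 0 ≤ p.2 → KruskalEqAt M lam R w p.1 p.2)
    (hw1 : ∀ μ ∈ Set.Icc (0:ℝ) c₀, w μ 0 = 0)
    (hw2 : ∀ ν ∈ Set.Ico (0:ℝ) δ₁, w 0 ν = 0) :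
    ∀ k : ℕ, ∀ μ ∈ Set.Icc (0:ℝ) c₀, iteratedDeriv k (fun ν => w μ ν) 0 = 0 := by
  obtain ⟨hRsmooth, hRpos⟩ := hR
  have hRΩ : ContDiffOn ℝ ∞ (fun p : ℝ × ℝ => R (p.1 * p.2)) Ω :=
    hRsmooth.comp (contDiff_fst.mul contDiff_snd).contDiffOn hΩprod
  have hV : ContDiffOn ℝ ∞ (fun p : ℝ × ℝ =>
      8 * M ^ 2 * lam ^ 2 / (R (p.1 * p.2) * Real.exp (R (p.1 * p.2) / (2 * M)))) Ω :=
    contDiffOn_const.div (hRΩ.mul (hRΩ.div_const _).exp) fun p hp =>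
      (mul_pos (hRpos _ (hΩprod p hp)).1 (Real.exp_pos _)).ne'
  have hseg : ∀ μ ∈ Icc 0 c₀, (μ, 0) ∈ Ω := fun μ hμ => hΩsub ⟨hμ, le_rfl, hδ₁⟩
  have ha0 : ∀ μ ∈ Ioo 0 c₀, 2 * R (μ * 0) ^ 2 ≠ 0 := fun μ hμ => by
    have := (hRpos _ (hΩprod _ (hseg μ (Ioo_subset_Icc_self hμ)))).1
    positivity
  have hcorner : ∀ k, partialSnd^[k] (uncurry w) (0, 0) = 0 := fun k => by
    rw [partialSnd_iterate_apply]
    exact iterate_deriv_eqOn_zero (fun _ hx => Ico_mem_nhdsGE_of_mem hx) hw2 k ⟨le_rfl, hδ₁⟩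
  intro k μ hμ
  have h := iterate_partialSnd_eq_zero_on_segment hΩopen hw (contDiffOn_const.mul (hRΩ.pow 2))
    (isLowerOrder_radialWaveOperator_sub hΩopen hw isOpen_Ioo (hRsmooth.pow 2) hΩprod hV)
    -- `KruskalEqAt` unfolds to `radialWaveOperator (R · ^ 2) V (uncurry w) = 0`
    (fun p hp h1 h2 => sub_eq_zero.2 (heq p hp h1 h2)) ha0 hseg hw1 hcorner k μ hμ
  rwa [partialSnd_iterate_apply, ← iteratedDeriv_eq_iterate] at h

/-- Key step in the proof of Theorem 5.1: a smooth solution of the λ-mode Kruskal wave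
equation vanishing on the horizon segments `{ν = 0, 0 ≤ μ ≤ c₀}` and
`{μ = 0, 0 ≤ ν < δ₁}` vanishes to infinite order at `{ν = 0, 0 ≤ μ ≤ c₀}`. -/
theorem infinite_order_vanishing_at_horizon
    (M lam c₀ δ₁ δ : ℝ) (hM : 0 < M) (hlam : 0 ≤ lam)
    (hc₀ : 0 < c₀) (hδ₁ : 0 < δ₁) (hδ : 0 < δ)
    (R : ℝ → ℝ) (hR : IsKruskalRadius M δ (c₀^2 + δ) R)
    (Ω : Set (ℝ × ℝ)) (hΩopen : IsOpen Ω)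
    (hΩsub : Set.Icc (0:ℝ) c₀ ×ˢ Set.Ico (0:ℝ) δ₁ ⊆ Ω)
    (hΩprod : ∀ p ∈ Ω, p.1 * p.2 ∈ Set.Ioo (-δ) (c₀^2 + δ))
    (w : ℝ → ℝ → ℝ) (hw : ContDiffOn ℝ ∞ (Function.uncurry w) Ω)
    (heq : ∀ p ∈ Ω, 0 ≤ p.1 → 0 ≤ p.2 → KruskalEqAt M lam R w p.1 p.2)
    (hw1 : ∀ μ ∈ Set.Icc (0:ℝ) c₀, w μ 0 = 0)
    (hw2 : ∀ ν ∈ Set.Ico (0:ℝ) δ₁, w 0 ν = 0) :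
    ∀ k : ℕ, ∀ μ ∈ Set.Icc (0:ℝ) c₀, iteratedDeriv k (fun ν => w μ ν) 0 = 0 :=
  infinite_order_vanishing_at_horizon_general M lam c₀ δ₁ δ hδ₁ R hR Ω hΩopen hΩsub hΩprod w hw heq
    hw1 hw2
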